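/- arXiv:math/0106019 — 7 statements merged into one kernel-verified Lean document; each statement's English description precedes it below -/
import Mathlib

section
/- Let E be a group and H a subgroup contained in the center of E, and consider the quotient (E×E)/H with composition ⟦(a,b)⟧ ∘ ⟦(c,d)⟧ := ⟦(a, d·(c⁻¹·b))⟧ (defined when c⁻¹·b ∈ H) and tensor product ⟦(e₁,e₂)⟧ ⊗ ⟦(e₃,e₄)⟧ := ⟦(e₁e₃, e₂e₄)⟧. Then the interchange law holds: for e₁,e₂,e₃,e₄,f₁,f₂,f₃,f₄ ∈ E with f₁⁻¹·e₂ ∈ H and f₃⁻¹·e₄ ∈ H, one has (f₁f₃)⁻¹·(e₂e₄) ∈ H and (⟦(e₁,e₂)⟧ ⊗ ⟦(e₃,e₄)⟧) ∘ (⟦(f₁,f₂)⟧ ⊗ ⟦(f₃,f₄)⟧) = (⟦(e₁,e₂)⟧ ∘ ⟦(f₁,f₂)⟧) ⊗ (⟦(e₃,e₄)⟧ ∘ ⟦(f₃,f₄)⟧). -/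
/-!
Since `f₁⁻¹ e₂` is central, sliding it past `f₃⁻¹` and past `f₄` shows that
`(f₁f₃)⁻¹(e₂e₄) = (f₁⁻¹e₂)(f₃⁻¹e₄)`, and that the two sides of the interchange law already
have equal representatives in `E × E`.
-/

/-- The equivalence relation on `E × E` given by the diagonal right action of the
central subgroup `H`: `(e₁, e₂) ~ (e₁ h, e₂ h)` for `h ∈ H`. -/
def twistedSetoid {E : Type*} [Group E] (H : Subgroup E) : Setoid (E × E) where
  r p q := ∃ h ∈ H, q.1 = p.1 * h ∧ q.2 = p.2 * h
  iseqv := by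
    constructor
    · intro p; exact ⟨1, H.one_mem, by simp, by simp⟩
    · rintro p q ⟨h, hh, h1, h2⟩
      exact ⟨h⁻¹, H.inv_mem hh, by rw [h1]; group, by rw [h2]; group⟩
    · rintro p q r ⟨h, hh, h1, h2⟩ ⟨k, hk, k1, k2⟩
      exact ⟨h * k, H.mul_mem hh hk, by rw [k1, h1, mul_assoc],
        by rw [k2, h2, mul_assoc]⟩

/-- `⟦(e₁, e₂)⟧ : (E × E)/H`, the class of `(e₁,e₂)` in the quotient. -/
def tmk {E : Type*} [Group E] (H : Subgroup E) (p : E × E) :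
    Quotient (twistedSetoid H) :=
  Quotient.mk (twistedSetoid H) p

/-- On representatives, the composite `⟦(a,b)⟧ ∘ ⟦(c,d)⟧ := ⟦(a, d·(c⁻¹·b))⟧`. -/
def tcomp {E : Type*} [Group E] (p q : E × E) : E × E :=
  (p.1, q.2 * (q.1⁻¹ * p.2))

/-- On representatives, the tensor product `⟦(e₁,e₂)⟧ ⊗ ⟦(e₃,e₄)⟧ := ⟦(e₁e₃, e₂e₄)⟧`. -/
def ttensor {E : Type*} [Group E] (p q : E × E) : E × E :=
  (p.1 * q.1, p.2 * q.2)

theorem mul_inv_mul_mul_of_inv_mul_mem_center {G : Type*} [Group G] {a b : G}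
    (hab : a⁻¹ * b ∈ Subgroup.center G) (c d : G) :
    (a * c)⁻¹ * (b * d) = a⁻¹ * b * (c⁻¹ * d) := by
  have hcomm := Subgroup.mem_center_iff.mp hab c⁻¹
  calc (a * c)⁻¹ * (b * d) = c⁻¹ * (a⁻¹ * b) * d := by group
    _ = a⁻¹ * b * c⁻¹ * d := by rw [hcomm]
    _ = a⁻¹ * b * (c⁻¹ * d) := by group

theorem tcomp_ttensor_ttensor {E : Type*} [Group E] {p q r s : E × E}
    (hpr : r.1⁻¹ * p.2 ∈ Subgroup.center E) :
    tcomp (ttensor p q) (ttensor r s) = ttensor (tcomp p r) (tcomp q s) := by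
  have hcomm := Subgroup.mem_center_iff.mp hpr s.2
  simp only [tcomp, ttensor, Prod.mk.injEq, true_and]
  rw [mul_inv_mul_mul_of_inv_mul_mem_center hpr]
  calc r.2 * s.2 * (r.1⁻¹ * p.2 * (s.1⁻¹ * q.2))
      = r.2 * (s.2 * (r.1⁻¹ * p.2)) * (s.1⁻¹ * q.2) := by group
    _ = r.2 * (r.1⁻¹ * p.2) * (s.2 * (s.1⁻¹ * q.2)) := by rw [hcomm]; group

/-- The interchange law between composition and tensor product on `(E × E)/H`,
for `H` a central subgroup of `E`: if `f₁⁻¹·e₂ ∈ H` and `f₃⁻¹·e₄ ∈ H` then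
`(f₁f₃)⁻¹·(e₂e₄) ∈ H` and
`(⟦(e₁,e₂)⟧ ⊗ ⟦(e₃,e₄)⟧) ∘ (⟦(f₁,f₂)⟧ ⊗ ⟦(f₃,f₄)⟧)
  = (⟦(e₁,e₂)⟧ ∘ ⟦(f₁,f₂)⟧) ⊗ (⟦(e₃,e₄)⟧ ∘ ⟦(f₃,f₄)⟧)`. -/
theorem twisted_interchange {E : Type*} [Group E] (H : Subgroup E)
    (hcentral : H ≤ Subgroup.center E)
    (e₁ e₂ e₃ e₄ f₁ f₂ f₃ f₄ : E)
    (h12 : f₁⁻¹ * e₂ ∈ H) (h34 : f₃⁻¹ * e₄ ∈ H) :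
    (f₁ * f₃)⁻¹ * (e₂ * e₄) ∈ H ∧
      tmk H (tcomp (ttensor (e₁, e₂) (e₃, e₄)) (ttensor (f₁, f₂) (f₃, f₄))) =
        tmk H (ttensor (tcomp (e₁, e₂) (f₁, f₂)) (tcomp (e₃, e₄) (f₃, f₄))) := by
  have hcenter : f₁⁻¹ * e₂ ∈ Subgroup.center E := hcentral h12
  refine ⟨?_, congrArg (tmk H) (tcomp_ttensor_ttensor hcenter)⟩
  rw [mul_inv_mul_mul_of_inv_mul_mem_center hcenter]
  exact H.mul_mem h12 h34
end

section
/- Let E be a group and H a subgroup contained in the center of E. Let ι be an index type, e : ι → ι → E with e j i = (e i j)⁻¹, f : ι → E, and η : ι → ι → E with η i j ∈ H for all i,j. Define e' i j := (f i)⁻¹·(e i j)·(f j)·(η i j), and set h i j k := (e i j)·(e j k)·(e k i), h' i j k := (e' i j)·(e' j k)·(e' k i). If h i j k ∈ H for all i,j,k, then for all i,j,k: h' i j k = (h i j k)·(η i j)·(η j k)·(η k i). -/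
namespace Subgroup

variable {E : Type*} [Group E]

theorem mul_mul_mul_eq_of_mem_center {a b : E} (ha : a ∈ center E) (hb : b ∈ center E)
    (x y z c : E) : x * a * (y * b) * (z * c) = x * y * z * a * b * c :=
  calc x * a * (y * b) * (z * c) = x * (a * y) * (b * z) * c := by simp only [mul_assoc]
    _ = x * (y * a) * (z * b) * c := by
      rw [mem_center_iff.mp ha y, mem_center_iff.mp hb z]
    _ = x * y * (a * z) * b * c := by simp only [mul_assoc]
    _ = x * y * z * a * b * c := by
      rw [← mem_center_iff.mp ha z]; simp only [mul_assoc]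

theorem inv_mul_mul_self_of_mem_center {c : E} (hc : c ∈ center E) (g : E) :
    g⁻¹ * c * g = c := by
  rw [mul_assoc, ← mem_center_iff.mp hc g, inv_mul_cancel_left]

end Subgroup

theorem twisted_cochain_transformation_general {E : Type*} [Group E] (H : Subgroup E)
    (hcentral : H ≤ Subgroup.center E)
    {ι : Type*} (e : ι → ι → E) (f : ι → E) (η : ι → ι → E)
    (hη : ∀ i j, η i j ∈ H)
    (hH : ∀ i j k, e i j * e j k * e k i ∈ H) :
    ∀ i j k,
      ((f i)⁻¹ * e i j * f j * η i j) * ((f j)⁻¹ * e j k * f k * η j k) *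
          ((f k)⁻¹ * e k i * f i * η k i) =
        (e i j * e j k * e k i) * η i j * η j k * η k i := by
  intro i j k
  rw [Subgroup.mul_mul_mul_eq_of_mem_center (hcentral (hη i j)) (hcentral (hη j k))]
  calc (f i)⁻¹ * e i j * f j * ((f j)⁻¹ * e j k * f k) * ((f k)⁻¹ * e k i * f i) *
          η i j * η j k * η k i
      = (f i)⁻¹ * (e i j * e j k * e k i) * f i * η i j * η j k * η k i := by group
    _ = (e i j * e j k * e k i) * η i j * η j k * η k i := by
      rw [Subgroup.inv_mul_mul_self_of_mem_center (hcentral (hH i j k))]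

/-- Transformation rule of the Čech 2-cochain `h i j k = (e i j)(e j k)(e k i)`
under an equivalence of twisted bundles: if `e' i j = (f i)⁻¹·(e i j)·(f j)·(η i j)`
with `η` valued in the central subgroup `H` and `h` valued in `H`, then
`h' i j k = (h i j k)·(η i j)·(η j k)·(η k i)`. -/
theorem twisted_cochain_transformation {E : Type*} [Group E] (H : Subgroup E)
    (hcentral : H ≤ Subgroup.center E)
    {ι : Type*} (e : ι → ι → E) (f : ι → E) (η : ι → ι → E)
    (hsym : ∀ i j, e j i = (e i j)⁻¹)
    (hη : ∀ i j, η i j ∈ H)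
    (hH : ∀ i j k, e i j * e j k * e k i ∈ H) :
    ∀ i j k,
      ((f i)⁻¹ * e i j * f j * η i j) * ((f j)⁻¹ * e j k * f k * η j k) *
          ((f k)⁻¹ * e k i * f i * η k i) =
        (e i j * e j k * e k i) * η i j * η j k * η k i :=
  twisted_cochain_transformation_general H hcentral e f η hη hH
end

section
/- Let 𝔸 be a normed ring that is a normed algebra over ℝ. Fix a ∈ ℝ, and let g : ℝ → 𝔸, A : ℝ → 𝔸, u : ℝ → 𝔸ˣ (units of 𝔸), and u' : ℝ → 𝔸. Suppose that at a point t ∈ ℝ the function g has derivative g(t)·A(t) (i.e., HasDerivAt g (g t * A t) t) and the function s ↦ ↑(u s) has derivative u'(t) at t. Then the function s ↦ (↑(u a))⁻¹ · g(s) · ↑(u s) has derivative (↑(u a))⁻¹ · g(t) · ↑(u t) · ( (↑(u t))⁻¹·A(t)·↑(u t) + (↑(u t))⁻¹·u'(t) ) at t. (This is the transformation rule 𝒫exp∫(u⁻¹Au + u⁻¹du) = u(a)⁻¹ · 𝒫exp∫A · u(b) for path-ordered integrals, at the level of the defining linear ODE.) -/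
theorem Units.mul_mul_conj_add_inv_mul {R : Type*} [Ring R] (x y z : R) (u : Rˣ) :
    x * u * (↑u⁻¹ * y * u + ↑u⁻¹ * z) = x * y * u + x * z := by
  simp only [mul_add, mul_assoc, Units.mul_inv_cancel_left]

theorem HasDerivAt.mul_units_gauge {𝕜 𝔸 : Type*} [NontriviallyNormedField 𝕜] [NormedRing 𝔸]
    [NormedAlgebra 𝕜 𝔸] {g : 𝕜 → 𝔸} {u : 𝕜 → 𝔸ˣ} {A u' : 𝔸} {t : 𝕜}
    (hg : HasDerivAt g (g t * A) t) (hu : HasDerivAt (fun s => (u s : 𝔸)) u' t) :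
    HasDerivAt (fun s => g s * u s) (g t * u t * (↑(u t)⁻¹ * A * u t + ↑(u t)⁻¹ * u')) t := by
  rw [Units.mul_mul_conj_add_inv_mul]
  exact hg.mul hu

/-- Transformation rule for path-ordered integrals at the level of the
defining linear ODE: if `g` solves `g' = g·A` at `t` and the (coerced) unit
curve `u` has derivative `u'` at `t`, then `s ↦ u(a)⁻¹·g(s)·u(s)` has
derivative `u(a)⁻¹·g(t)·u(t)·(u(t)⁻¹·A(t)·u(t) + u(t)⁻¹·u'(t))` at `t`.
This is `𝒫exp∫(u⁻¹Au + u⁻¹du) = u(a)⁻¹ · 𝒫exp∫A · u(b)`. -/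
theorem pathOrderedExp_gauge_transformation
    {𝔸 : Type*} [NormedRing 𝔸] [NormedAlgebra ℝ 𝔸]
    (a : ℝ) (g A : ℝ → 𝔸) (u : ℝ → 𝔸ˣ) (u' : ℝ → 𝔸) (t : ℝ)
    (hg : HasDerivAt g (g t * A t) t)
    (hu : HasDerivAt (fun s => ((u s : 𝔸))) (u' t) t) :
    HasDerivAt (fun s => (((u a)⁻¹ : 𝔸ˣ) : 𝔸) * g s * ((u s : 𝔸)))
      ((((u a)⁻¹ : 𝔸ˣ) : 𝔸) * g t * ((u t : 𝔸)) *
        ((((u t)⁻¹ : 𝔸ˣ) : 𝔸) * A t * ((u t : 𝔸)) +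
          (((u t)⁻¹ : 𝔸ˣ) : 𝔸) * u' t)) t := by
  simpa only [mul_assoc] using (hg.mul_units_gauge hu).const_mul (((u a)⁻¹ : 𝔸ˣ) : 𝔸)
end

section
/- Let 𝔸 be a normed ring and normed ℝ-algebra, and let a, b, c : ℝ → 𝔸ˣ with a', b', c' : ℝ → 𝔸 such that at every t the coercions of a, b, c have derivatives a'(t), b'(t), c'(t) respectively. Let Aᵢ, Aⱼ, Aₖ : ℝ → 𝔸, and define ωᵢⱼ(t) := Aⱼ(t) − (a t)⁻¹·Aᵢ(t)·(a t) − (a t)⁻¹·a'(t), ωⱼₖ(t) := Aₖ(t) − (b t)⁻¹·Aⱼ(t)·(b t) − (b t)⁻¹·b'(t), ωₖᵢ(t) := Aᵢ(t) − (c t)⁻¹·Aₖ(t)·(c t) − (c t)⁻¹·c'(t). Set h(t) := (a t)·(b t)·(c t) and h'(t) := a'(t)·(b t)·(c t) + (a t)·b'(t)·(c t) + (a t)·(b t)·c'(t). If for all t the elements ωᵢⱼ(t), ωⱼₖ(t), ωₖᵢ(t), h(t) and h'(t) all lie in the center of 𝔸, then for all t: ωᵢⱼ(t) + ωⱼₖ(t)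 + ωₖᵢ(t) = −(h t)⁻¹·h'(t). -/
/-!
Multiplying a discrepancy `ω = Aⱼ - e⁻¹ Aᵢ e - e⁻¹ e'` by `e` solves for the derivative:
`e' = e Aⱼ - Aᵢ e - e ω`. Substituted into the Leibniz rule for `h = a b c`, the connection
forms telescope to the commutator `h Aᵢ - Aᵢ h`, which vanishes because `h` is central, and the
central discrepancies move to the right, leaving `h' = -h (ωᵢⱼ + ωⱼₖ + ωₖᵢ)`.
-/

section

variable {R : Type*} [Ring R]

theorem Units.eq_mul_sub_sub_of_discrepancy (e : Rˣ) {e' Aᵢ Aⱼ ω : R}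
    (hω : ω = Aⱼ - ↑e⁻¹ * Aᵢ * e - ↑e⁻¹ * e') :
    e' = e * Aⱼ - Aᵢ * e - e * ω := by
  subst hω
  simp only [mul_sub, ← mul_assoc, Units.mul_inv, one_mul]
  abel

theorem leibniz_eq_commutator_sub_of_discrepancies {u v w u' v' w' A₁ A₂ A₃ ω₁ ω₂ ω₃ : R}
    (hu : u' = u * A₂ - A₁ * u - u * ω₁) (hv : v' = v * A₃ - A₂ * v - v * ω₂)
    (hw : w' = w * A₁ - A₃ * w - w * ω₃) :
    u' * v * w + u * v' * w + u * v * w' =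
      u * v * w * A₁ - A₁ * (u * v * w) - (u * ω₁ * v * w + u * v * ω₂ * w + u * v * w * ω₃) := by
  subst hu hv hw
  noncomm_ring

theorem mul_add_mul_of_mem_center {u v w ω₁ ω₂ : R} (h₁ : ω₁ ∈ Set.center R)
    (h₂ : ω₂ ∈ Set.center R) :
    u * ω₁ * v * w + u * v * ω₂ * w = u * v * w * (ω₁ + ω₂) := by
  rw [Semigroup.mem_center_iff] at h₁ h₂
  simp only [mul_add, mul_assoc, ← h₁, ← h₂]

end

theorem twisted_connection_cocycle_identity_general
    {𝔸 : Type*} [NormedRing 𝔸]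
    (a b c : ℝ → 𝔸ˣ) (a' b' c' : ℝ → 𝔸)
    (Ai Aj Ak ωij ωjk ωki h' : ℝ → 𝔸)
    (hωij : ∀ t, ωij t =
      Aj t - (((a t)⁻¹ : 𝔸ˣ) : 𝔸) * Ai t * ((a t : 𝔸)) - (((a t)⁻¹ : 𝔸ˣ) : 𝔸) * a' t)
    (hωjk : ∀ t, ωjk t =
      Ak t - (((b t)⁻¹ : 𝔸ˣ) : 𝔸) * Aj t * ((b t : 𝔸)) - (((b t)⁻¹ : 𝔸ˣ) : 𝔸) * b' t)
    (hωki : ∀ t, ωki t =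
      Ai t - (((c t)⁻¹ : 𝔸ˣ) : 𝔸) * Ak t * ((c t : 𝔸)) - (((c t)⁻¹ : 𝔸ˣ) : 𝔸) * c' t)
    (hh' : ∀ t, h' t =
      a' t * ((b t : 𝔸)) * ((c t : 𝔸)) + ((a t : 𝔸)) * b' t * ((c t : 𝔸)) +
        ((a t : 𝔸)) * ((b t : 𝔸)) * c' t)
    (hcen : ∀ t, ωij t ∈ Set.center 𝔸 ∧ ωjk t ∈ Set.center 𝔸 ∧
      ωki t ∈ Set.center 𝔸 ∧ (((a t * b t * c t : 𝔸ˣ) : 𝔸)) ∈ Set.center 𝔸 ∧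
      h' t ∈ Set.center 𝔸) :
    ∀ t, ωij t + ωjk t + ωki t =
      -(((((a t * b t * c t)⁻¹ : 𝔸ˣ)) : 𝔸) * h' t) := by
  intro t
  obtain ⟨hij, hjk, -, hh, -⟩ := hcen t
  have hleib := leibniz_eq_commutator_sub_of_discrepancies
    ((a t).eq_mul_sub_sub_of_discrepancy (hωij t))
    ((b t).eq_mul_sub_sub_of_discrepancy (hωjk t))
    ((c t).eq_mul_sub_sub_of_discrepancy (hωki t))
  rw [← hh' t, mul_add_mul_of_mem_center hij hjk, ← mul_add] at hleib
  simp only [Units.val_mul] at hh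
  rw [← Semigroup.mem_center_iff.mp hh, sub_self, zero_sub] at hleib
  rw [hleib, mul_neg, neg_neg, ← Units.val_mul, ← Units.val_mul, Units.inv_mul_cancel_left]

/-- The cocycle identity `A_ij + A_jk + A_ki = −h_ijk⁻¹ dh_ijk` for the
discrepancy 1-forms of a 0-connection in a twisted principal bundle, evaluated
along a path.  Here `a, b, c` play the role of the transition functions
`e_ij, e_jk, e_ki`, `Ai, Aj, Ak` the local connection forms, `ωij` etc. the
discrepancies `A_j − e_ij⁻¹ A_i e_ij − e_ij⁻¹ de_ij`, and `h = a·b·c` the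
`H`-valued cocycle with derivative `h'` (Leibniz rule); the hypothesis is that
the `ω`'s, `h` and `h'` are central. -/
theorem twisted_connection_cocycle_identity
    {𝔸 : Type*} [NormedRing 𝔸] [NormedAlgebra ℝ 𝔸]
    (a b c : ℝ → 𝔸ˣ) (a' b' c' : ℝ → 𝔸)
    (ha : ∀ t, HasDerivAt (fun s => ((a s : 𝔸))) (a' t) t)
    (hb : ∀ t, HasDerivAt (fun s => ((b s : 𝔸))) (b' t) t)
    (hc : ∀ t, HasDerivAt (fun s => ((c s : 𝔸))) (c' t) t)
    (Ai Aj Ak ωij ωjk ωki h' : ℝ → 𝔸)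
    (hωij : ∀ t, ωij t =
      Aj t - (((a t)⁻¹ : 𝔸ˣ) : 𝔸) * Ai t * ((a t : 𝔸)) - (((a t)⁻¹ : 𝔸ˣ) : 𝔸) * a' t)
    (hωjk : ∀ t, ωjk t =
      Ak t - (((b t)⁻¹ : 𝔸ˣ) : 𝔸) * Aj t * ((b t : 𝔸)) - (((b t)⁻¹ : 𝔸ˣ) : 𝔸) * b' t)
    (hωki : ∀ t, ωki t =
      Ai t - (((c t)⁻¹ : 𝔸ˣ) : 𝔸) * Ak t * ((c t : 𝔸)) - (((c t)⁻¹ : 𝔸ˣ) : 𝔸) * c' t)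
    (hh' : ∀ t, h' t =
      a' t * ((b t : 𝔸)) * ((c t : 𝔸)) + ((a t : 𝔸)) * b' t * ((c t : 𝔸)) +
        ((a t : 𝔸)) * ((b t : 𝔸)) * c' t)
    (hcen : ∀ t, ωij t ∈ Set.center 𝔸 ∧ ωjk t ∈ Set.center 𝔸 ∧
      ωki t ∈ Set.center 𝔸 ∧ (((a t * b t * c t : 𝔸ˣ) : 𝔸)) ∈ Set.center 𝔸 ∧
      h' t ∈ Set.center 𝔸) :
    ∀ t, ωij t + ωjk t + ωki t =
      -(((((a t * b t * c t)⁻¹ : 𝔸ˣ)) : 𝔸) * h' t) :=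
  twisted_connection_cocycle_identity_general a b c a' b' c' Ai Aj Ak ωij ωjk ωki h' hωij hωjk hωki
    hh' hcen
end

section
/- Let 𝔸 be a normed ring and normed ℝ-algebra, a : ℝ → 𝔸ˣ with a' : ℝ → 𝔸 the derivative of its coercion at every point, and Aᵢ, Aⱼ : ℝ → 𝔸. Define ωᵢⱼ(t) := Aⱼ(t) − (a t)⁻¹·Aᵢ(t)·(a t) − (a t)⁻¹·a'(t), and define ωⱼᵢ(t) := Aᵢ(t) − (a t)·Aⱼ(t)·(a t)⁻¹ + a'(t)·(a t)⁻¹ (the analogous discrepancy for the inverse transition function a⁻¹, whose derivative is −(a t)⁻¹·a'(t)·(a t)⁻¹). If ωᵢⱼ(t) lies in the center of 𝔸 for all t, then ωⱼᵢ(t) = −ωᵢⱼ(t) for all t. -/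
/-!
Conjugating `ωᵢⱼ` by the transition function `a` gives `-ωⱼᵢ`, a purely algebraic identity in
any ring; a central element is fixed by conjugation, so `ωⱼᵢ = -ωᵢⱼ`.
-/

section GaugeDiscrepancy

variable {R : Type*} [Ring R]

/-- `gaugeDiscrepancy e de Aᵢ Aⱼ` is the 1-form `A_ij = A_j − e⁻¹ A_i e − e⁻¹ de`. -/
def gaugeDiscrepancy (u : Rˣ) (du A B : R) : R :=
  B - ↑u⁻¹ * A * ↑u - ↑u⁻¹ * du

theorem Units.mul_mul_inv_of_mem_center (u : Rˣ) {z : R} (hz : z ∈ Set.center R) :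
    ↑u * z * ↑u⁻¹ = z := by
  rw [((Set.mem_center_iff.mp hz).comm _).symm, mul_assoc, Units.mul_inv, mul_one]

/-- `-(u⁻¹ du u⁻¹)` is the differential of `u⁻¹`, so this is `A_ji` for the transition
function `e_ji = e_ij⁻¹`. -/
theorem gaugeDiscrepancy_inv (u : Rˣ) (du A B : R) :
    gaugeDiscrepancy u⁻¹ (-(↑u⁻¹ * du * ↑u⁻¹)) B A = A - ↑u * B * ↑u⁻¹ + du * ↑u⁻¹ := by
  simp [gaugeDiscrepancy, ← mul_assoc]

theorem mul_gaugeDiscrepancy_mul_inv (u : Rˣ) (du A B : R) :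
    ↑u * gaugeDiscrepancy u du A B * ↑u⁻¹ =
      -gaugeDiscrepancy u⁻¹ (-(↑u⁻¹ * du * ↑u⁻¹)) B A := by
  rw [gaugeDiscrepancy_inv, gaugeDiscrepancy]
  simp only [mul_sub, sub_mul, ← mul_assoc, Units.mul_inv, one_mul, Units.mul_inv_cancel_right]
  abel

end GaugeDiscrepancy

theorem twisted_connection_antisymmetry_general
    {𝔸 : Type*} [NormedRing 𝔸] [NormedAlgebra ℝ 𝔸]
    (a : ℝ → 𝔸ˣ) (a' : ℝ → 𝔸)
    (Ai Aj ωij ωji : ℝ → 𝔸)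
    (hωij : ∀ t, ωij t =
      Aj t - (((a t)⁻¹ : 𝔸ˣ) : 𝔸) * Ai t * ((a t : 𝔸)) - (((a t)⁻¹ : 𝔸ˣ) : 𝔸) * a' t)
    (hωji : ∀ t, ωji t =
      Ai t - ((a t : 𝔸)) * Aj t * (((a t)⁻¹ : 𝔸ˣ) : 𝔸) + a' t * (((a t)⁻¹ : 𝔸ˣ) : 𝔸))
    (hcen : ∀ t, ωij t ∈ Set.center 𝔸) :
    ∀ t, ωji t = -ωij t := by
  intro t
  have hij : ωij t = gaugeDiscrepancy (a t) (a' t) (Ai t) (Aj t) := hωij t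
  have hji : ωji t = gaugeDiscrepancy (a t)⁻¹ (-(↑(a t)⁻¹ * a' t * ↑(a t)⁻¹)) (Aj t) (Ai t) := by
    rw [gaugeDiscrepancy_inv, hωji t]
  calc ωji t = -(↑(a t) * ωij t * ↑(a t)⁻¹) := by
        rw [hji, hij, mul_gaugeDiscrepancy_mul_inv, neg_neg]
    _ = -ωij t := by rw [(a t).mul_mul_inv_of_mem_center (hcen t)]

/-- Antisymmetry `A_ji = −A_ij` of the discrepancy 1-form of a 0-connection in
a twisted principal bundle, evaluated along a path.  Here `a` plays the role of
the transition function `e_ij` (with the inverse transition function `a⁻¹`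
having derivative `−a⁻¹ a' a⁻¹`), `Ai, Aj` the local connection forms, and
`ωij = A_j − e_ij⁻¹ A_i e_ij − e_ij⁻¹ de_ij` is assumed central. -/
theorem twisted_connection_antisymmetry
    {𝔸 : Type*} [NormedRing 𝔸] [NormedAlgebra ℝ 𝔸]
    (a : ℝ → 𝔸ˣ) (a' : ℝ → 𝔸)
    (ha : ∀ t, HasDerivAt (fun s => ((a s : 𝔸))) (a' t) t)
    (Ai Aj ωij ωji : ℝ → 𝔸)
    (hωij : ∀ t, ωij t =
      Aj t - (((a t)⁻¹ : 𝔸ˣ) : 𝔸) * Ai t * ((a t : 𝔸)) - (((a t)⁻¹ : 𝔸ˣ) : 𝔸) * a' t)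
    (hωji : ∀ t, ωji t =
      Ai t - ((a t : 𝔸)) * Aj t * (((a t)⁻¹ : 𝔸ˣ) : 𝔸) + a' t * (((a t)⁻¹ : 𝔸ˣ) : 𝔸))
    (hcen : ∀ t, ωij t ∈ Set.center 𝔸) :
    ∀ t, ωji t = -ωij t :=
  twisted_connection_antisymmetry_general a a' Ai Aj ωij ωji hωij hωji hcen
end

section
/- Let 𝔸 be a normed ring and normed ℝ-algebra. Let e, f, g, η : ℝ → 𝔸ˣ with derivatives (of coercions) e', f', g', η' : ℝ → 𝔸 at every t, and let Aᵢ, Aⱼ, Bᵢ, Bⱼ : ℝ → 𝔸. Define ωᵢⱼ(t) := Aⱼ(t) − (e t)⁻¹·Aᵢ(t)·(e t) − (e t)⁻¹·e'(t). Define the gauge-transformed data: Ê(t) := (f t)⁻¹·(e t)·(g t)·(η t) with derivative Ê'(t) computed by the product and inverse rules, Âᵢ(t) := (f t)⁻¹·Aᵢ(t)·(f t) + (f t)⁻¹·f'(t) + Bᵢ(t), Âⱼ(t) := (g t)⁻¹·Aⱼ(t)·(g t) + (g t)⁻¹·g'(t) + Bⱼ(t), and ω̂ᵢⱼ(t) :=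 Âⱼ(t) − Ê(t)⁻¹·Âᵢ(t)·Ê(t) − Ê(t)⁻¹·Ê'(t). If for all t the elements ωᵢⱼ(t), Bᵢ(t), Bⱼ(t), η(t) and η'(t) lie in the center of 𝔸, then for all t: ω̂ᵢⱼ(t) = ωᵢⱼ(t) + Bⱼ(t) − Bᵢ(t) − (η t)⁻¹·η'(t). -/
/-!
Write `u • (A, u') := u⁻¹ A u + u⁻¹ u'` for the gauge action of a unit `u` with derivative `u'`
on a connection value `A`. It is an action: acting by `u` then `v` is acting by `u v` with
derivative `u' v + u v'`, and `u⁻¹` (with derivative `-u⁻¹ u' u⁻¹`) undoes `u`. Hence the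
transformed transition function `f⁻¹ e g η` acts on `f • Aᵢ` as `η • g • e • Aᵢ`. Since
`e • Aᵢ = Aⱼ - ωᵢⱼ` with `ωᵢⱼ` central, and a central `η` acts by adding `η⁻¹ η'`, the central
terms `ωᵢⱼ`, `Bᵢ`, `Bⱼ`, `η⁻¹ η'` pass through every conjugation and the rest cancels.
-/

section GaugeTransform

variable {R : Type*} [Ring R]

/-- `u'` stands for the derivative of `u` along the path. -/
def gaugeTransform (u : Rˣ) (u' A : R) : R := ↑u⁻¹ * A * u + ↑u⁻¹ * u'

/-- The paper's 1-form `A_ij`, for the transition function `e = e_ij`. -/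
def discrepancy (e : Rˣ) (e' Ai Aj : R) : R := Aj - gaugeTransform e e' Ai

theorem gaugeTransform_mul (u v : Rˣ) (u' v' A : R) :
    gaugeTransform (u * v) (u' * v + u * v') A = gaugeTransform v v' (gaugeTransform u u' A) := by
  simp only [gaugeTransform, mul_inv_rev, Units.val_mul, mul_add, add_mul, mul_assoc,
    Units.inv_mul_cancel_left]
  abel

theorem gaugeTransform_inv_gaugeTransform (u : Rˣ) (u' A : R) :
    gaugeTransform u⁻¹ (-(↑u⁻¹ * u' * ↑u⁻¹)) (gaugeTransform u u' A) = A := by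
  simp only [gaugeTransform, inv_inv, mul_add, add_mul, mul_neg, mul_assoc,
    Units.mul_inv_cancel_left, Units.mul_inv, mul_one]
  abel

theorem gaugeTransform_add_of_mem_center (u : Rˣ) (u' A : R) {B : R} (hB : B ∈ Set.center R) :
    gaugeTransform u u' (A + B) = gaugeTransform u u' A + B := by
  have hconj : ↑u⁻¹ * B * ↑u = B := by
    rw [mul_assoc, (hB.comm _).eq, Units.inv_mul_cancel_left]
  simp only [gaugeTransform, mul_add, add_mul, hconj]
  abel

theorem gaugeTransform_sub_of_mem_center (u : Rˣ) (u' A : R) {B : R} (hB : B ∈ Set.center R) :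
    gaugeTransform u u' (A - B) = gaugeTransform u u' A - B := by
  rw [eq_sub_iff_add_eq, ← gaugeTransform_add_of_mem_center u u' _ hB, sub_add_cancel]

theorem gaugeTransform_of_mem_center {u : Rˣ} (hu : (u : R) ∈ Set.center R) (u' A : R) :
    gaugeTransform u u' A = A + ↑u⁻¹ * u' := by
  rw [gaugeTransform, mul_assoc, ← (hu.comm A).eq, Units.inv_mul_cancel_left]

theorem gaugeTransform_eq_sub_discrepancy (e : Rˣ) (e' Ai Aj : R) :
    gaugeTransform e e' Ai = Aj - discrepancy e e' Ai Aj := by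
  rw [discrepancy, sub_sub_cancel]

theorem discrepancy_gaugeTransform (e f g η : Rˣ) (e' f' g' η' Ai Aj Bi Bj : R)
    (hω : discrepancy e e' Ai Aj ∈ Set.center R) (hBi : Bi ∈ Set.center R)
    (hη : (η : R) ∈ Set.center R) :
    discrepancy (f⁻¹ * e * g * η)
        (((-(↑f⁻¹ * f' * ↑f⁻¹) * e + ↑f⁻¹ * e') * g + ↑(f⁻¹ * e) * g') * η
          + ↑(f⁻¹ * e * g) * η')
        (gaugeTransform f f' Ai + Bi) (gaugeTransform g g' Aj + Bj) =
      discrepancy e e' Ai Aj + Bj - Bi - ↑η⁻¹ * η' := by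
  have hchain : gaugeTransform (f⁻¹ * e * g * η)
      (((-(↑f⁻¹ * f' * ↑f⁻¹) * e + ↑f⁻¹ * e') * g + ↑(f⁻¹ * e) * g') * η + ↑(f⁻¹ * e * g) * η')
      (gaugeTransform f f' Ai) = gaugeTransform g g' Aj - discrepancy e e' Ai Aj + ↑η⁻¹ * η' := by
    rw [gaugeTransform_mul, gaugeTransform_mul, gaugeTransform_mul,
      gaugeTransform_inv_gaugeTransform, gaugeTransform_eq_sub_discrepancy e e' Ai Aj,
      gaugeTransform_sub_of_mem_center _ _ _ hω, gaugeTransform_of_mem_center hη]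
  rw [discrepancy, gaugeTransform_add_of_mem_center _ _ _ hBi, hchain]
  abel

end GaugeTransform

theorem twisted_connection_gauge_transformation_general
    {𝔸 : Type*} [NormedRing 𝔸]
    (e f g η : ℝ → 𝔸ˣ) (e' f' g' η' : ℝ → 𝔸)
    (Ai Aj Bi Bj ωij Ahati Ahatj Ehat' omegaHat : ℝ → 𝔸)
    (hωij : ∀ t, ωij t =
      Aj t - (((e t)⁻¹ : 𝔸ˣ) : 𝔸) * Ai t * ((e t : 𝔸)) - (((e t)⁻¹ : 𝔸ˣ) : 𝔸) * e' t)
    (hAhati : ∀ t, Ahati t =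
      (((f t)⁻¹ : 𝔸ˣ) : 𝔸) * Ai t * ((f t : 𝔸)) + (((f t)⁻¹ : 𝔸ˣ) : 𝔸) * f' t + Bi t)
    (hAhatj : ∀ t, Ahatj t =
      (((g t)⁻¹ : 𝔸ˣ) : 𝔸) * Aj t * ((g t : 𝔸)) + (((g t)⁻¹ : 𝔸ˣ) : 𝔸) * g' t + Bj t)
    (hEhat' : ∀ t, Ehat' t =
      -((((f t)⁻¹ : 𝔸ˣ) : 𝔸) * f' t * (((f t)⁻¹ : 𝔸ˣ) : 𝔸)) * ((e t : 𝔸)) * ((g t : 𝔸)) * ((η t : 𝔸)) +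
        (((f t)⁻¹ : 𝔸ˣ) : 𝔸) * e' t * ((g t : 𝔸)) * ((η t : 𝔸)) +
        (((f t)⁻¹ : 𝔸ˣ) : 𝔸) * ((e t : 𝔸)) * g' t * ((η t : 𝔸)) +
        (((f t)⁻¹ : 𝔸ˣ) : 𝔸) * ((e t : 𝔸)) * ((g t : 𝔸)) * η' t)
    (homegaHat : ∀ t, omegaHat t =
      Ahatj t - ((((f t)⁻¹ * e t * g t * η t)⁻¹ : 𝔸ˣ) : 𝔸) * Ahati t *
          (((f t)⁻¹ * e t * g t * η t : 𝔸ˣ) : 𝔸) -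
        ((((f t)⁻¹ * e t * g t * η t)⁻¹ : 𝔸ˣ) : 𝔸) * Ehat' t)
    (hcen : ∀ t, ωij t ∈ Set.center 𝔸 ∧ Bi t ∈ Set.center 𝔸 ∧
      Bj t ∈ Set.center 𝔸 ∧ ((η t : 𝔸)) ∈ Set.center 𝔸 ∧ η' t ∈ Set.center 𝔸) :
    ∀ t, omegaHat t = ωij t + Bj t - Bi t - (((η t)⁻¹ : 𝔸ˣ) : 𝔸) * η' t := by
  intro t
  have hω : ωij t = discrepancy (e t) (e' t) (Ai t) (Aj t) := by
    rw [hωij t, discrepancy, gaugeTransform, sub_sub]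
  obtain ⟨hωc, hBi, -, hη, -⟩ := hcen t
  rw [hω] at hωc ⊢
  have hEhat'_chain : Ehat' t =
      (((-(↑(f t)⁻¹ * f' t * ↑(f t)⁻¹) * e t + ↑(f t)⁻¹ * e' t) * g t
        + ↑((f t)⁻¹ * e t) * g' t) * η t + ↑((f t)⁻¹ * e t * g t) * η' t) := by
    simp only [hEhat' t, Units.val_mul, add_mul, mul_assoc]
  calc omegaHat t
      = discrepancy ((f t)⁻¹ * e t * g t * η t) (Ehat' t)
          (gaugeTransform (f t) (f' t) (Ai t) + Bi t)
          (gaugeTransform (g t) (g' t) (Aj t) + Bj t) := by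
        rw [homegaHat t, hAhati t, hAhatj t, discrepancy, gaugeTransform, gaugeTransform,
          gaugeTransform, sub_sub]
    _ = _ := by
        rw [hEhat'_chain]
        exact discrepancy_gaugeTransform _ _ _ _ _ _ _ _ _ _ _ _ hωc hBi hη

/-- Transformation law `A'_ij = A_ij + B_j − B_i − h_ij⁻¹ dh_ij` of the
discrepancy 1-form under an equivalence of twisted principal bundles with
0-connection, evaluated along a path.  Here `e` is the transition function
`e_ij`, `f` and `g` the gauge transformations `e_i, e_j`, `η` the central
1-cochain `h_ij`, `Ai, Aj` the local connection forms, `Bi, Bj` the central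
1-forms, `Ehat = f⁻¹ e g η` the gauge-transformed transition function with
derivative `Ehat'` computed by the product and inverse rules, and
`Ahati, Ahatj, omegaHat` the gauge-transformed data. -/
theorem twisted_connection_gauge_transformation
    {𝔸 : Type*} [NormedRing 𝔸] [NormedAlgebra ℝ 𝔸]
    (e f g η : ℝ → 𝔸ˣ) (e' f' g' η' : ℝ → 𝔸)
    (he : ∀ t, HasDerivAt (fun s => ((e s : 𝔸))) (e' t) t)
    (hf : ∀ t, HasDerivAt (fun s => ((f s : 𝔸))) (f' t) t)
    (hg : ∀ t, HasDerivAt (fun s => ((g s : 𝔸))) (g' t) t)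
    (hη : ∀ t, HasDerivAt (fun s => ((η s : 𝔸))) (η' t) t)
    (Ai Aj Bi Bj ωij Ahati Ahatj Ehat' omegaHat : ℝ → 𝔸)
    (hωij : ∀ t, ωij t =
      Aj t - (((e t)⁻¹ : 𝔸ˣ) : 𝔸) * Ai t * ((e t : 𝔸)) - (((e t)⁻¹ : 𝔸ˣ) : 𝔸) * e' t)
    (hAhati : ∀ t, Ahati t =
      (((f t)⁻¹ : 𝔸ˣ) : 𝔸) * Ai t * ((f t : 𝔸)) + (((f t)⁻¹ : 𝔸ˣ) : 𝔸) * f' t + Bi t)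
    (hAhatj : ∀ t, Ahatj t =
      (((g t)⁻¹ : 𝔸ˣ) : 𝔸) * Aj t * ((g t : 𝔸)) + (((g t)⁻¹ : 𝔸ˣ) : 𝔸) * g' t + Bj t)
    (hEhat' : ∀ t, Ehat' t =
      -((((f t)⁻¹ : 𝔸ˣ) : 𝔸) * f' t * (((f t)⁻¹ : 𝔸ˣ) : 𝔸)) * ((e t : 𝔸)) * ((g t : 𝔸)) * ((η t : 𝔸)) +
        (((f t)⁻¹ : 𝔸ˣ) : 𝔸) * e' t * ((g t : 𝔸)) * ((η t : 𝔸)) +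
        (((f t)⁻¹ : 𝔸ˣ) : 𝔸) * ((e t : 𝔸)) * g' t * ((η t : 𝔸)) +
        (((f t)⁻¹ : 𝔸ˣ) : 𝔸) * ((e t : 𝔸)) * ((g t : 𝔸)) * η' t)
    (homegaHat : ∀ t, omegaHat t =
      Ahatj t - ((((f t)⁻¹ * e t * g t * η t)⁻¹ : 𝔸ˣ) : 𝔸) * Ahati t *
          (((f t)⁻¹ * e t * g t * η t : 𝔸ˣ) : 𝔸) -
        ((((f t)⁻¹ * e t * g t * η t)⁻¹ : 𝔸ˣ) : 𝔸) * Ehat' t)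
    (hcen : ∀ t, ωij t ∈ Set.center 𝔸 ∧ Bi t ∈ Set.center 𝔸 ∧
      Bj t ∈ Set.center 𝔸 ∧ ((η t : 𝔸)) ∈ Set.center 𝔸 ∧ η' t ∈ Set.center 𝔸) :
    ∀ t, omegaHat t = ωij t + Bj t - Bi t - (((η t)⁻¹ : 𝔸ˣ) : 𝔸) * η' t :=
  twisted_connection_gauge_transformation_general e f g η e' f' g' η' Ai Aj Bi Bj ωij Ahati Ahatj
    Ehat' omegaHat hωij hAhati hAhatj hEhat' homegaHat hcen
end

section
/- Let M be a smooth manifold (with corners allowed; modelled on a corner model I over 𝕜 = ℝ) and let γ₁, γ₂ : ℝ → M be smooth maps. Suppose there exists ε > 0 such that γ₁ is constant on the interval [1−ε, ∞), γ₂ is constant on (−∞, ε], and γ₁(1) = γ₂(0). Then the concatenation γ : ℝ → M defined by γ(t) = γ₁(2t) for t ≤ 1/2 and γ(t) = γ₂(2t−1) for t > 1/2 is smooth. -/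
open scoped Manifold

open Set Filter Topology in
lemma eventuallyEq_concat_of_sitting {X : Type*} {γ₁ γ₂ : ℝ → X} {ε : ℝ} (hε : 0 < ε)
    (h₁ : ∀ s ∈ Ici (1 - ε), γ₁ s = γ₁ 1) (h₂ : ∀ s ∈ Iic ε, γ₂ s = γ₂ 0)
    (h₁₂ : γ₁ 1 = γ₂ 0) :
    (fun t : ℝ => γ₁ (2 * t)) =ᶠ[𝓝 (1 / 2)] fun t => γ₂ (2 * t - 1) := by
  filter_upwards [Ioo_mem_nhds (by linarith : 1 / 2 - ε / 2 < (1 / 2 : ℝ))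
    (by linarith : (1 / 2 : ℝ) < 1 / 2 + ε / 2)] with t ⟨ht₁, ht₂⟩
  calc γ₁ (2 * t) = γ₁ 1 := h₁ _ (by rw [mem_Ici]; linarith)
    _ = γ₂ 0 := h₁₂
    _ = γ₂ (2 * t - 1) := (h₂ _ (by rw [mem_Iic]; linarith)).symm

theorem smooth_concatenation_of_sitting_general
    {E' : Type*} [NormedAddCommGroup E'] [NormedSpace ℝ E']
    {H : Type*} [TopologicalSpace H] (I : ModelWithCorners ℝ E' H)
    {M : Type*} [TopologicalSpace M] [ChartedSpace H M]
    (γ₁ γ₂ : ℝ → M)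
    (h₁ : ContMDiff 𝓘(ℝ, ℝ) I (⊤ : ℕ∞) γ₁) (h₂ : ContMDiff 𝓘(ℝ, ℝ) I (⊤ : ℕ∞) γ₂)
    (hsit : ∃ ε > (0 : ℝ),
      (∀ s ∈ Set.Ici (1 - ε), γ₁ s = γ₁ 1) ∧
      (∀ s ∈ Set.Iic ε, γ₂ s = γ₂ 0) ∧ γ₁ 1 = γ₂ 0) :
    ContMDiff 𝓘(ℝ, ℝ) I (⊤ : ℕ∞)
      (fun t : ℝ => if t ≤ 1 / 2 then γ₁ (2 * t) else γ₂ (2 * t - 1)) := by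
  obtain ⟨ε, hε, hsit₁, hsit₂, hsit₁₂⟩ := hsit
  have hdouble : ContMDiff 𝓘(ℝ, ℝ) 𝓘(ℝ, ℝ) (⊤ : ℕ∞) fun t : ℝ => 2 * t :=
    contMDiff_const.mul contMDiff_id
  -- The `if` is definitionally `Set.piecewise (Set.Iic (1 / 2))`.
  exact ContMDiff.piecewise_Iic (h₁.comp hdouble) (h₂.comp (hdouble.sub contMDiff_const))
    (eventuallyEq_concat_of_sitting hε hsit₁ hsit₂ hsit₁₂)

/-- Concatenation of smooth paths that sit at the concatenation point is
smooth: if `γ₁, γ₂ : ℝ → M` are smooth, `γ₁` is constant on `[1−ε, ∞)`, `γ₂`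
is constant on `(−∞, ε]` for some `ε > 0`, and `γ₁(1) = γ₂(0)`, then the
concatenation `γ(t) = γ₁(2t)` for `t ≤ 1/2`, `γ(t) = γ₂(2t−1)` for `t > 1/2`,
is smooth. -/
theorem smooth_concatenation_of_sitting
    {E' : Type*} [NormedAddCommGroup E'] [NormedSpace ℝ E']
    {H : Type*} [TopologicalSpace H] (I : ModelWithCorners ℝ E' H)
    {M : Type*} [TopologicalSpace M] [ChartedSpace H M]
    [IsManifold I (⊤ : ℕ∞) M]
    (γ₁ γ₂ : ℝ → M)
    (h₁ : ContMDiff 𝓘(ℝ, ℝ) I (⊤ : ℕ∞) γ₁) (h₂ : ContMDiff 𝓘(ℝ, ℝ) I (⊤ : ℕ∞) γ₂)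
    (hsit : ∃ ε > (0 : ℝ),
      (∀ s ∈ Set.Ici (1 - ε), γ₁ s = γ₁ 1) ∧
      (∀ s ∈ Set.Iic ε, γ₂ s = γ₂ 0) ∧ γ₁ 1 = γ₂ 0) :
    ContMDiff 𝓘(ℝ, ℝ) I (⊤ : ℕ∞)
      (fun t : ℝ => if t ≤ 1 / 2 then γ₁ (2 * t) else γ₂ (2 * t - 1)) :=
  smooth_concatenation_of_sitting_general I γ₁ γ₂ h₁ h₂ hsit
end
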